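/- Let R be a right Kasch ring. The following statements are equivalent: (1) every mininjective right R-module is injective; (2) R is right Artinian and right strongly min-coherent; (3) R is a right C-ring and right strongly min-coherent. -/

import Mathlib

universe u v w v'

open MulOpposite

section RightDefs
variable (R : Type u) [Ring R]

/-- A right `R`-module (i.e. an `Rᵐᵒᵖ`-module) `M` is mininjective if every homomorphism
from a minimal right ideal `I` of `R` into `M` extends to a homomorphism `R → M`. -/
def IsMininjective (M : Type v) [AddCommGroup M] [Module Rᵐᵒᵖ M] : Prop :=
  ∀ I : Submodule Rᵐᵒᵖ R, IsAtom I → ∀ f : ↥I →ₗ[Rᵐᵒᵖ] M,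
    ∃ g : R →ₗ[Rᵐᵒᵖ] M, ∀ x : ↥I, g ↑x = f x

/-- A right `R`-module `M` is min-projective if every short exact sequence
`0 → N → X → M → 0` with `N` mininjective splits (equivalently `Ext¹(M, N) = 0`
for every mininjective `N`). -/
def IsMinProjective (M : Type v) [AddCommGroup M] [Module Rᵐᵒᵖ M] : Prop :=
  ∀ (X : Type (max u v)) [AddCommGroup X] [Module Rᵐᵒᵖ X] (p : X →ₗ[Rᵐᵒᵖ] M),
    Function.Surjective p → IsMininjective R ↥(LinearMap.ker p) →
      ∃ s : M →ₗ[Rᵐᵒᵖ] X, p ∘ₗ s = LinearMap.id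

/-- `R` is right strongly min-coherent if every minimal right ideal of `R` is min-projective. -/
def RightStronglyMinCoherent : Prop :=
  ∀ I : Submodule Rᵐᵒᵖ R, IsAtom I → IsMinProjective R ↥I

/-- `R` is a right quasi V-ring if every simple right `R`-module which is not isomorphic to
any right ideal of `R` is injective. -/
def RightQuasiVRing : Prop :=
  ∀ (S : Type v) [AddCommGroup S] [Module Rᵐᵒᵖ S], IsSimpleModule Rᵐᵒᵖ S →
    (¬ ∃ I : Submodule Rᵐᵒᵖ R, Nonempty (S ≃ₗ[Rᵐᵒᵖ] ↥I)) → Module.Injective Rᵐᵒᵖ S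

/-- `R` is a right GV-ring if every simple right `R`-module is injective or projective. -/
def RightGVRing : Prop :=
  ∀ (S : Type v) [AddCommGroup S] [Module Rᵐᵒᵖ S], IsSimpleModule Rᵐᵒᵖ S →
    Module.Injective Rᵐᵒᵖ S ∨ Module.Projective Rᵐᵒᵖ S

/-- `R` is right Kasch if every simple right `R`-module is isomorphic to a right ideal of `R`. -/
def RightKasch : Prop :=
  ∀ (S : Type v) [AddCommGroup S] [Module Rᵐᵒᵖ S], IsSimpleModule Rᵐᵒᵖ S →
    ∃ I : Submodule Rᵐᵒᵖ R, Nonempty (S ≃ₗ[Rᵐᵒᵖ] ↥I)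

/-- A right `R`-module `M` is almost injective if for every monomorphism `i : A → B` and
every `f : A → M`, either `f` extends to `B`, or there are a nonzero direct summand `D` of
`B` (with projection `π : B → D`) and `h : M → D` with `h ∘ f = π ∘ i`. -/
def IsAlmostInjective (M : Type v) [AddCommGroup M] [Module Rᵐᵒᵖ M] : Prop :=
  ∀ (A B : Type w) [AddCommGroup A] [AddCommGroup B] [Module Rᵐᵒᵖ A] [Module Rᵐᵒᵖ B]
    (i : A →ₗ[Rᵐᵒᵖ] B), Function.Injective i → ∀ f : A →ₗ[Rᵐᵒᵖ] M,
    (∃ g : B →ₗ[Rᵐᵒᵖ] M, g ∘ₗ i = f) ∨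
    (∃ D : Submodule Rᵐᵒᵖ B, D ≠ ⊥ ∧ ∃ π : B →ₗ[Rᵐᵒᵖ] ↥D,
      π ∘ₗ D.subtype = LinearMap.id ∧ ∃ h : M →ₗ[Rᵐᵒᵖ] ↥D, h ∘ₗ f = π ∘ₗ i)

/-- `R` is a right almost V-ring if every simple right `R`-module is almost injective. -/
def RightAlmostVRing : Prop :=
  ∀ (S : Type v) [AddCommGroup S] [Module Rᵐᵒᵖ S], IsSimpleModule Rᵐᵒᵖ S →
    IsAlmostInjective.{u, v, w} R S

/-- `R` is right serial if `R`, as a right `R`-module, is an internal direct sum of finitely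
many uniserial submodules. -/
def RightSerial : Prop :=
  ∃ (n : ℕ) (c : Fin n → Submodule Rᵐᵒᵖ R), DirectSum.IsInternal c ∧
    ∀ i, ∀ N P : Submodule Rᵐᵒᵖ ↥(c i), N ≤ P ∨ P ≤ N

/-- `R` is left serial if `R`, as a left `R`-module, is an internal direct sum of finitely
many uniserial submodules. -/
def LeftSerial : Prop :=
  ∃ (n : ℕ) (c : Fin n → Submodule R R), DirectSum.IsInternal c ∧
    ∀ i, ∀ N P : Submodule R ↥(c i), N ≤ P ∨ P ≤ N

/-- The square of the Jacobson radical of `R` is zero. -/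
def JacobsonSquareZero : Prop :=
  ∀ x ∈ (⊥ : TwoSidedIdeal R).jacobson, ∀ y ∈ (⊥ : TwoSidedIdeal R).jacobson, x * y = 0

end RightDefs

section Aux

open Submodule

variable {R : Type u} [Ring R]

/-- Mininjectivity transfers along a linear equivalence. -/
theorem IsMininjective.congr {M N : Type u} [AddCommGroup M] [Module Rᵐᵒᵖ M]
    [AddCommGroup N] [Module Rᵐᵒᵖ N] (e : M ≃ₗ[Rᵐᵒᵖ] N) (h : IsMininjective R M) :
    IsMininjective R N := by
  intro I hI f
  obtain ⟨g, hg⟩ := h I hI (e.symm.toLinearMap ∘ₗ f)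
  refine ⟨e.toLinearMap ∘ₗ g, fun x => ?_⟩
  have hx := hg x
  simp only [LinearMap.coe_comp, Function.comp_apply, LinearEquiv.coe_coe] at hx ⊢
  rw [hx, e.apply_symm_apply]

/-- Min-projectivity transfers along a linear equivalence. -/
theorem IsMinProjective.congr {M N : Type u} [AddCommGroup M] [Module Rᵐᵒᵖ M]
    [AddCommGroup N] [Module Rᵐᵒᵖ N] (e : M ≃ₗ[Rᵐᵒᵖ] N) (h : IsMinProjective R M) :
    IsMinProjective R N := by
  intro X _ _ p hp hker
  set q : X →ₗ[Rᵐᵒᵖ] M := e.symm.toLinearMap ∘ₗ p with hq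
  have hqsurj : Function.Surjective q := fun m => by
    obtain ⟨x, hx⟩ := hp (e m)
    exact ⟨x, by simp [hq, hx]⟩
  have hkerq : LinearMap.ker q = LinearMap.ker p := by
    ext x
    simp [hq, LinearMap.mem_ker, LinearEquiv.map_eq_zero_iff]
  obtain ⟨s, hs⟩ := h X q hqsurj (by rw [hkerq]; exact hker)
  refine ⟨s ∘ₗ e.symm.toLinearMap, ?_⟩
  ext n
  have h1 := LinearMap.ext_iff.1 hs (e.symm n)
  simp only [LinearMap.coe_comp, Function.comp_apply, LinearEquiv.coe_coe, LinearMap.id_coe,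
    id_eq, hq] at h1 ⊢
  exact e.symm.injective h1

/-- A map into a finite product of injective modules extends. -/
theorem pi_extension {ι : Type v'} (E : ι → Type u) [∀ i, AddCommGroup (E i)]
    [∀ i, Module Rᵐᵒᵖ (E i)] (hE : ∀ i, Module.Injective Rᵐᵒᵖ (E i))
    {X Y : Type u} [AddCommGroup X] [AddCommGroup Y] [Module Rᵐᵒᵖ X] [Module Rᵐᵒᵖ Y]
    (f : X →ₗ[Rᵐᵒᵖ] Y) (hf : Function.Injective f) (g : X →ₗ[Rᵐᵒᵖ] (∀ i, E i)) :
    ∃ G : Y →ₗ[Rᵐᵒᵖ] (∀ i, E i), ∀ x, G (f x) = g x := by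
  have H : ∀ i, ∃ h : Y →ₗ[Rᵐᵒᵖ] E i, ∀ x, h (f x) = (LinearMap.proj (R := Rᵐᵒᵖ) (φ := E) i) (g x) :=
    fun i => (hE i).out f hf ((LinearMap.proj (R := Rᵐᵒᵖ) (φ := E) i) ∘ₗ g)
  choose hi hhi using H
  exact ⟨LinearMap.pi hi, fun x => funext fun i => hhi i x⟩

/-- Bundled injective embedding. -/
structure InjectiveEmbedding (R : Type u) [Ring R] (M : Type u) [AddCommGroup M]
    [Module Rᵐᵒᵖ M] where
  E : Type u
  [cg : AddCommGroup E]
  [mo : Module Rᵐᵒᵖ E]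
  emb : M →ₗ[Rᵐᵒᵖ] E
  inj : Function.Injective emb
  injE : Module.Injective Rᵐᵒᵖ E

attribute [instance] InjectiveEmbedding.cg InjectiveEmbedding.mo

/-- Every module embeds into an injective module. -/
noncomputable def injectiveEmbedding (R : Type u) [Ring R] (M : Type u) [AddCommGroup M]
    [Module Rᵐᵒᵖ M] : InjectiveEmbedding R M := by
  let Mc : ModuleCat Rᵐᵒᵖ := ModuleCat.of Rᵐᵒᵖ M
  let E := CategoryTheory.Injective.under Mc
  have hE : CategoryTheory.Injective E := CategoryTheory.Injective.injective_under Mc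
  refine ⟨E, (CategoryTheory.Injective.ι Mc).hom, ?_, ?_⟩
  · exact (ModuleCat.mono_iff_injective (CategoryTheory.Injective.ι Mc)).1 inferInstance
  · exact Module.injective_module_of_injective_object Rᵐᵒᵖ E
      (inj := show CategoryTheory.Injective (ModuleCat.of Rᵐᵒᵖ E) from hE)

/-- A module with no simple submodules is mininjective. -/
theorem mininjective_of_no_atoms {M : Type u} [AddCommGroup M] [Module Rᵐᵒᵖ M]
    (h : ∀ N : Submodule Rᵐᵒᵖ M, ¬ IsAtom N) : IsMininjective R M := by
  intro I hI f
  have hsimp : IsSimpleModule Rᵐᵒᵖ ↥I := isSimpleModule_iff_isAtom.2 hI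
  have hf0 : f = 0 := by
    by_contra hf
    have hker : LinearMap.ker f = ⊥ := by
      rcases eq_bot_or_eq_top (LinearMap.ker f) with h' | h'
      · exact h'
      · exact absurd (LinearMap.ker_eq_top.1 h') hf
    have hinj : Function.Injective f := LinearMap.ker_eq_bot.1 hker
    have : IsSimpleModule Rᵐᵒᵖ ↥(LinearMap.range f) :=
      IsSimpleModule.congr (LinearEquiv.ofInjective f hinj).symm
    exact h _ (isSimpleModule_iff_isAtom.1 this)
  exact ⟨0, fun x => by simp [hf0]⟩

/-- An injective kernel gives a splitting. -/
theorem splitting_of_injective_ker {M X : Type u} [AddCommGroup M] [Module Rᵐᵒᵖ M]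
    [AddCommGroup X] [Module Rᵐᵒᵖ X] (p : X →ₗ[Rᵐᵒᵖ] M) (hp : Function.Surjective p)
    (hinj : Module.Injective Rᵐᵒᵖ ↥(LinearMap.ker p)) :
    ∃ s : M →ₗ[Rᵐᵒᵖ] X, p ∘ₗ s = LinearMap.id := by
  obtain ⟨r, hr0⟩ := hinj.out (LinearMap.ker p).subtype (Submodule.injective_subtype _)
    LinearMap.id
  have hr : ∀ x : ↥(LinearMap.ker p), r ↑x = x := hr0
  set e : ↥(LinearMap.ker r) →ₗ[Rᵐᵒᵖ] M := p ∘ₗ (LinearMap.ker r).subtype with he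
  have hinj' : Function.Injective e := by
    intro a b hab
    have hsub : ((a : X) - b) ∈ LinearMap.ker p := by
      rw [LinearMap.mem_ker, map_sub]
      exact sub_eq_zero.2 hab
    have h1 : r ((a : X) - b) = ⟨(a : X) - b, hsub⟩ := hr ⟨_, hsub⟩
    have h2 : r ((a : X) - b) = 0 := by
      rw [map_sub, LinearMap.mem_ker.1 a.2, LinearMap.mem_ker.1 b.2, sub_zero]
    have h3 : (a : X) - b = 0 := by
      have h4 := h1.symm.trans h2
      exact congrArg Subtype.val h4
    exact Subtype.ext (sub_eq_zero.1 h3)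
  have hsurj' : Function.Surjective e := by
    intro mm
    obtain ⟨x₀, hx₀⟩ := hp mm
    have hker : x₀ - ((r x₀ : X)) ∈ LinearMap.ker r := by
      rw [LinearMap.mem_ker, map_sub, hr (r x₀), sub_self]
    refine ⟨⟨_, hker⟩, ?_⟩
    show p (x₀ - ↑(r x₀)) = mm
    rw [map_sub, hx₀, LinearMap.mem_ker.1 (r x₀).2, sub_zero]
  set Eq := LinearEquiv.ofBijective e ⟨hinj', hsurj'⟩ with hEq
  refine ⟨(LinearMap.ker r).subtype ∘ₗ Eq.symm.toLinearMap, ?_⟩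
  ext mm
  have h5 : p ((Eq.symm mm : X)) = e (Eq.symm mm) := rfl
  have h6 : Eq (Eq.symm mm) = mm := Eq.apply_symm_apply mm
  have h7 : e (Eq.symm mm) = mm := h6
  simp only [LinearMap.coe_comp, Function.comp_apply, LinearEquiv.coe_coe, Submodule.coe_subtype,
    LinearMap.id_coe, id_eq]
  rw [h5, h7]

/-- The submodule of eventually-zero sequences. -/
def evZero (E : ℕ → Type u) [∀ n, AddCommGroup (E n)] [∀ n, Module Rᵐᵒᵖ (E n)] :
    Submodule Rᵐᵒᵖ (∀ n, E n) where
  carrier := {x | ∃ N, ∀ n, N ≤ n → x n = 0}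
  add_mem' := by
    rintro a b ⟨N₁, h₁⟩ ⟨N₂, h₂⟩
    exact ⟨max N₁ N₂, fun n hn => by
      simp [h₁ n (le_trans (le_max_left _ _) hn), h₂ n (le_trans (le_max_right _ _) hn)]⟩
  zero_mem' := ⟨0, fun n _ => rfl⟩
  smul_mem' := by
    rintro c x ⟨N, h⟩
    exact ⟨N, fun n hn => by simp [h n hn]⟩

theorem evZero_mininjective (E : ℕ → Type u) [∀ n, AddCommGroup (E n)]
    [∀ n, Module Rᵐᵒᵖ (E n)] (hE : ∀ n, Module.Injective Rᵐᵒᵖ (E n)) :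
    IsMininjective R ↥(evZero (R := R) E) := by
  intro I hI f
  haveI hsimp : IsSimpleModule Rᵐᵒᵖ ↥I := isSimpleModule_iff_isAtom.2 hI
  obtain ⟨s₀, hs₀I, hs₀⟩ := (Submodule.ne_bot_iff I).1 hI.1
  set σ : ↥I := ⟨s₀, hs₀I⟩ with hσdef
  have hσ : σ ≠ 0 := by
    intro h
    exact hs₀ (congrArg Subtype.val h)
  have hspan : ∀ x : ↥I, ∃ c : Rᵐᵒᵖ, c • σ = x := by
    intro x
    have htop := IsSimpleModule.span_singleton_eq_top (R := Rᵐᵒᵖ) (M := ↥I) hσ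
    have hx : x ∈ Submodule.span Rᵐᵒᵖ {σ} := htop ▸ Submodule.mem_top
    exact Submodule.mem_span_singleton.1 hx
  obtain ⟨N, hN⟩ := (f σ).2
  have hvanish : ∀ (x : ↥I) (n : ℕ), N ≤ n → ((f x : ∀ m, E m)) n = 0 := by
    intro x n hn
    obtain ⟨c, rfl⟩ := hspan x
    have h1 : ((f (c • σ) : ∀ m, E m)) = c • ((f σ : ∀ m, E m)) := by
      rw [map_smul]; rfl
    rw [h1]
    simp [hN n hn]
  set F : ↥I →ₗ[Rᵐᵒᵖ] (∀ i : Fin N, E i) :=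
    LinearMap.pi (fun i : Fin N =>
      (LinearMap.proj (R := Rᵐᵒᵖ) (φ := E) (i : ℕ)) ∘ₗ ((evZero (R := R) E).subtype ∘ₗ f))
    with hF
  have hFval : ∀ (x : ↥I) (i : Fin N), F x i = (f x : ∀ m, E m) i := fun x i => rfl
  obtain ⟨G, hG⟩ := pi_extension (fun i : Fin N => E i) (fun i => hE i) I.subtype
    (Submodule.injective_subtype I) F
  set gbig : R →ₗ[Rᵐᵒᵖ] (∀ n, E n) :=
    LinearMap.pi (fun n => if h : n < N then
      (LinearMap.proj (R := Rᵐᵒᵖ) (φ := fun i : Fin N => E i) ⟨n, h⟩) ∘ₗ G else 0) with hgbig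
  have hgbigval : ∀ (r : R) (n : ℕ), gbig r n = if h : n < N then G r ⟨n, h⟩ else 0 := by
    intro r n
    by_cases h : n < N
    · rw [hgbig]
      simp only [LinearMap.pi_apply]
      rw [dif_pos h, dif_pos h]
      rfl
    · rw [hgbig]
      simp only [LinearMap.pi_apply]
      rw [dif_neg h, dif_neg h]
      rfl
  have hmemT : ∀ r : R, gbig r ∈ evZero (R := R) E := fun r =>
    ⟨N, fun n hn => by rw [hgbigval]; exact dif_neg (Nat.not_lt.2 hn)⟩
  refine ⟨LinearMap.codRestrict _ gbig hmemT, ?_⟩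
  intro x
  apply Subtype.ext
  funext n
  show gbig ↑x n = (f x : ∀ m, E m) n
  rw [hgbigval]
  by_cases h : n < N
  · rw [dif_pos h]
    have hx : G ↑x = F x := hG x
    rw [hx]
    rfl
  · rw [dif_neg h]
    exact (hvanish x n (Nat.not_lt.1 h)).symm

/-- Statement (1) implies right Noetherian. -/
theorem isNoetherian_of_h1
    (h1 : ∀ (M : Type u) [AddCommGroup M] [Module Rᵐᵒᵖ M],
      IsMininjective R M → Module.Injective Rᵐᵒᵖ M) : IsNoetherian Rᵐᵒᵖ R := by
  rw [← monotone_stabilizes_iff_noetherian]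
  intro C
  let Emb : ∀ n : ℕ, InjectiveEmbedding R (R ⧸ C n) := fun n => injectiveEmbedding R (R ⧸ C n)
  let E : ℕ → Type u := fun n => (Emb n).E
  set T := evZero (R := R) E with hT
  have hTminj : IsMininjective R ↥T := evZero_mininjective E fun n => (Emb n).injE
  have hTinj := h1 ↥T hTminj
  set I : Submodule Rᵐᵒᵖ R := ⨆ n, C n with hI
  have hmem : ∀ x : ↥I, ∃ N, ∀ n, N ≤ n → (x : R) ∈ C n := by
    intro x
    obtain ⟨k, hk⟩ := (Submodule.mem_iSup_of_chain C (x : R)).1 x.2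
    exact ⟨k, fun n hn => C.monotone hn hk⟩
  set φpre : ↥I →ₗ[Rᵐᵒᵖ] (∀ n, E n) :=
    LinearMap.pi (fun n => (Emb n).emb ∘ₗ ((C n).mkQ ∘ₗ I.subtype)) with hφpre
  have hφ0 : ∀ x : ↥I, φpre x ∈ T := by
    intro x
    obtain ⟨N, hN⟩ := hmem x
    refine ⟨N, fun n hn => ?_⟩
    show (Emb n).emb ((Submodule.Quotient.mk (x : R) : R ⧸ C n)) = 0
    rw [(Submodule.Quotient.mk_eq_zero _).2 (hN n hn), map_zero]
  set φ : ↥I →ₗ[Rᵐᵒᵖ] ↥T := LinearMap.codRestrict T φpre hφ0 with hφ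
  obtain ⟨g, hg⟩ := hTinj.out I.subtype (Submodule.injective_subtype I) φ
  obtain ⟨N, hN⟩ := (g 1).2
  have hIle : ∀ n, N ≤ n → I ≤ C n := by
    intro n hn x hx
    have h1x : g x = φ ⟨x, hx⟩ := hg ⟨x, hx⟩
    have hx1 : (op x) • (1 : R) = x := by
      rw [MulOpposite.smul_eq_mul_unop, MulOpposite.unop_op, one_mul]
    have h2x : g x = (op x) • g 1 := by
      rw [← map_smul, hx1]
    have h3 : ((φ ⟨x, hx⟩ : ↥T) : ∀ k, E k) n = 0 := by
      rw [← h1x, h2x]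
      have hc : (((op x) • g 1 : ↥T) : ∀ k, E k) n = (op x) • (((g 1 : ↥T) : ∀ k, E k) n) := rfl
      rw [hc, hN n hn, smul_zero]
    have h4 : (Emb n).emb (Submodule.Quotient.mk x) = 0 := by
      have hval : ((φ ⟨x, hx⟩ : ↥T) : ∀ k, E k) n
          = (Emb n).emb ((C n).mkQ x) := rfl
      rw [hval, Submodule.mkQ_apply] at h3
      exact h3
    have h5 : (Submodule.Quotient.mk x : R ⧸ C n) = 0 := by
      apply (Emb n).inj
      rw [h4, map_zero]
    exact (Submodule.Quotient.mk_eq_zero _).1 h5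
  refine ⟨N, fun m hm => ?_⟩
  exact le_antisymm ((le_iSup C N).trans (hIle m hm)) ((le_iSup C m).trans (hIle N le_rfl))

/-- Statement (1) implies every nontrivial module has a simple submodule. -/
theorem exists_atom_of_h1
    (h1 : ∀ (M : Type u) [AddCommGroup M] [Module Rᵐᵒᵖ M],
      IsMininjective R M → Module.Injective Rᵐᵒᵖ M)
    (M : Type u) [AddCommGroup M] [Module Rᵐᵒᵖ M] [Nontrivial M] :
    ∃ N : Submodule Rᵐᵒᵖ M, IsAtom N := by
  by_contra hno
  push_neg at hno
  have hnoatom : ∀ (P : Submodule Rᵐᵒᵖ M) (Q : Submodule Rᵐᵒᵖ ↥P), ¬ IsAtom Q := by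
    intro P Q hQ
    haveI : IsSimpleModule Rᵐᵒᵖ ↥Q := isSimpleModule_iff_isAtom.2 hQ
    have e := Submodule.equivMapOfInjective P.subtype (Submodule.injective_subtype P) Q
    have : IsSimpleModule Rᵐᵒᵖ ↥(Q.map P.subtype) := IsSimpleModule.congr (N := ↥Q) e.symm
    exact hno _ (isSimpleModule_iff_isAtom.1 this)
  have hsemis : IsSemisimpleModule Rᵐᵒᵖ M := by
    refine { toComplementedLattice := ⟨?_⟩ }
    intro P
    have hPm : IsMininjective R ↥P := mininjective_of_no_atoms (hnoatom P)
    have hPinj := h1 ↥P hPm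
    obtain ⟨r, hr0⟩ := hPinj.out P.subtype (Submodule.injective_subtype P) LinearMap.id
    have hr : ∀ x : ↥P, r ↑x = x := hr0
    refine ⟨LinearMap.ker r, ?_, ?_⟩
    · rw [disjoint_iff]
      rw [Submodule.eq_bot_iff]
      rintro x ⟨hxP, hxr⟩
      have h1x : r x = ⟨x, hxP⟩ := hr ⟨x, hxP⟩
      have h2x : r x = 0 := hxr
      have := h1x.symm.trans h2x
      exact congrArg Subtype.val this
    · rw [codisjoint_iff, eq_top_iff]
      intro x _
      have hker : x - ↑(r x) ∈ LinearMap.ker r := by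
        rw [LinearMap.mem_ker, map_sub, hr (r x), sub_self]
      have hx : x = ↑(r x) + (x - ↑(r x)) := by abel
      rw [hx]
      exact Submodule.add_mem_sup (r x).2 hker
  obtain ⟨A, hA⟩ := IsSemisimpleModule.exists_simple_submodule Rᵐᵒᵖ M
  exact hno A (isSimpleModule_iff_isAtom.1 hA)

/-- A simple module is Artinian. -/
theorem isArtinian_of_simple {M : Type u} [AddCommGroup M] [Module Rᵐᵒᵖ M]
    (h : IsSimpleModule Rᵐᵒᵖ M) : IsArtinian Rᵐᵒᵖ M := by
  refine (isArtinian_iff _ _).2 ⟨fun a => ?_⟩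
  have hbot : Acc (· < ·) (⊥ : Submodule Rᵐᵒᵖ M) :=
    Acc.intro _ fun b hb => absurd hb (by simp)
  rcases eq_bot_or_eq_top a with rfl | rfl
  · exact hbot
  · refine Acc.intro _ fun b hb => ?_
    rcases eq_bot_or_eq_top b with rfl | rfl
    · exact hbot
    · exact absurd hb (lt_irrefl _)

/-- Noetherian plus "every nontrivial module has an atom" implies Artinian. -/
theorem isArtinian_of_noeth_semiatomic (hN : IsNoetherian Rᵐᵒᵖ R)
    (hsa : ∀ (M : Type u) [AddCommGroup M] [Module Rᵐᵒᵖ M] [Nontrivial M],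
      ∃ N : Submodule Rᵐᵒᵖ M, IsAtom N) :
    IsArtinian Rᵐᵒᵖ R := by
  have hbot : IsArtinian Rᵐᵒᵖ ↥(⊥ : Submodule Rᵐᵒᵖ R) := isArtinian_of_finite
  obtain ⟨N, hNs, hNmax⟩ := set_has_maximal_iff_noetherian.2 hN
    {P : Submodule Rᵐᵒᵖ R | IsArtinian Rᵐᵒᵖ ↥P} ⟨⊥, hbot⟩
  by_cases hNtop : N = ⊤
  · subst hNtop
    haveI : IsArtinian Rᵐᵒᵖ ↥(⊤ : Submodule Rᵐᵒᵖ R) := hNs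
    exact isArtinian_of_linearEquiv (Submodule.topEquiv)
  · exfalso
    haveI : Nontrivial (R ⧸ N) := Submodule.Quotient.nontrivial_iff.2
      (lt_top_iff_ne_top.2 hNtop).ne
    obtain ⟨S, hS⟩ := hsa (R ⧸ N)
    set N' := S.comap N.mkQ with hN'
    have hNN' : N ≤ N' := by
      intro x hx
      show N.mkQ x ∈ S
      rw [Submodule.mkQ_apply, (Submodule.Quotient.mk_eq_zero _).2 hx]
      exact S.zero_mem
    have hlt : N < N' := by
      obtain ⟨y, hyS, hy0⟩ := (Submodule.ne_bot_iff S).1 hS.1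
      obtain ⟨x, hx⟩ := N.mkQ_surjective y
      refine lt_of_le_of_ne hNN' fun he => ?_
      have hxN' : x ∈ N' := by
        show N.mkQ x ∈ S
        rw [hx]; exact hyS
      rw [← he] at hxN'
      apply hy0
      rw [← hx, Submodule.mkQ_apply]
      exact (Submodule.Quotient.mk_eq_zero _).2 hxN'
    haveI hSsimple : IsSimpleModule Rᵐᵒᵖ ↥S := isSimpleModule_iff_isAtom.2 hS
    haveI hSart : IsArtinian Rᵐᵒᵖ ↥S := isArtinian_of_simple hSsimple
    haveI hNart : IsArtinian Rᵐᵒᵖ ↥N := hNs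
    have hq : ∀ x : ↥N', N.mkQ ↑x ∈ S := fun x => x.2
    have : IsArtinian Rᵐᵒᵖ ↥N' := by
      refine isArtinian_of_range_eq_ker (Submodule.inclusion hNN')
        (LinearMap.codRestrict S (N.mkQ ∘ₗ N'.subtype) hq) ?_
      ext x
      constructor
      · rintro ⟨y, rfl⟩
        show LinearMap.codRestrict S (N.mkQ ∘ₗ N'.subtype) hq _ = 0
        apply Subtype.ext
        show N.mkQ ↑(Submodule.inclusion hNN' y) = 0
        rw [Submodule.mkQ_apply]
        exact (Submodule.Quotient.mk_eq_zero _).2 (by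
          have : (↑(Submodule.inclusion hNN' y) : R) = ↑y := rfl
          rw [this]; exact y.2)
      · intro hx
        have hx' : N.mkQ ↑x = 0 := congrArg Subtype.val hx
        rw [Submodule.mkQ_apply] at hx'
        have hxN : (x : R) ∈ N := (Submodule.Quotient.mk_eq_zero _).1 hx'
        exact ⟨⟨↑x, hxN⟩, Subtype.ext rfl⟩
    exact hNmax N' this hlt

/-- `R` is isomorphic to `Rᵐᵒᵖ` as a right `R`-module. -/
def opEquivRight : R ≃ₗ[Rᵐᵒᵖ] Rᵐᵒᵖ where
  toFun := op
  invFun := unop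
  left_inv _ := rfl
  right_inv _ := rfl
  map_add' _ _ := rfl
  map_smul' _ _ := rfl

theorem injective_of_rightBaer (M : Type u) [AddCommGroup M] [Module Rᵐᵒᵖ M]
    (h : ∀ (I : Submodule Rᵐᵒᵖ R) (f : ↥I →ₗ[Rᵐᵒᵖ] M),
      ∃ g : R →ₗ[Rᵐᵒᵖ] M, ∀ x : ↥I, g ↑x = f x) :
    Module.Injective Rᵐᵒᵖ M := by
  set e : R ≃ₗ[Rᵐᵒᵖ] Rᵐᵒᵖ := opEquivRight (R := R) with hedef
  apply Module.Baer.injective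
  intro J g
  set I : Submodule Rᵐᵒᵖ R := Submodule.comap e.toLinearMap J with hIdef
  have hmemI : ∀ y : R, y ∈ I ↔ op y ∈ J := fun y => Submodule.mem_comap
  set rmap : ↥I →ₗ[Rᵐᵒᵖ] ↥J := e.toLinearMap.restrict (fun x hx => hx) with hrmap
  obtain ⟨g', hg'⟩ := h I (g ∘ₗ rmap)
  refine ⟨g' ∘ₗ e.symm.toLinearMap, fun x hx => ?_⟩
  have hunop : unop x ∈ I := (hmemI (unop x)).2 (by rwa [op_unop])
  have h1 := hg' ⟨unop x, hunop⟩
  show g' (e.symm.toLinearMap x) = g ⟨x, hx⟩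
  have h2 : e.symm.toLinearMap x = ((⟨unop x, hunop⟩ : ↥I) : R) := rfl
  rw [h2, h1]
  show g (rmap ⟨unop x, hunop⟩) = g ⟨x, hx⟩
  have h3 : rmap ⟨unop x, hunop⟩ = ⟨x, hx⟩ := Subtype.ext (op_unop x)
  rw [h3]

/-- The pushout extension step. -/
theorem pushout_extend {M K : Type u} [AddCommGroup M] [Module Rᵐᵒᵖ M]
    [AddCommGroup K] [Module Rᵐᵒᵖ K] (hM : IsMininjective R M)
    {S' : Type u} [AddCommGroup S'] [Module Rᵐᵒᵖ S'] (q : K →ₗ[Rᵐᵒᵖ] S')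
    (hq : Function.Surjective q) (hproj : IsMinProjective R S')
    (g : ↥(LinearMap.ker q) →ₗ[Rᵐᵒᵖ] M) :
    ∃ G : K →ₗ[Rᵐᵒᵖ] M, ∀ d : ↥(LinearMap.ker q), G ↑d = g d := by
  classical
  set w : ↥(LinearMap.ker q) →ₗ[Rᵐᵒᵖ] M × K :=
    LinearMap.prod g (-((LinearMap.ker q).subtype)) with hw
  set W := LinearMap.range w with hW
  set π : (M × K) →ₗ[Rᵐᵒᵖ] (M × K) ⧸ W := W.mkQ with hπ
  have hWker : W ≤ LinearMap.ker (q ∘ₗ LinearMap.snd Rᵐᵒᵖ M K) := by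
    rintro _ ⟨d, rfl⟩
    have hd : q ↑d = 0 := LinearMap.mem_ker.1 d.2
    simp [hw, LinearMap.mem_ker, hd]
  set p : ((M × K) ⧸ W) →ₗ[Rᵐᵒᵖ] S' := W.liftQ (q ∘ₗ LinearMap.snd Rᵐᵒᵖ M K) hWker with hp
  have hpπ : ∀ a : M × K, p (π a) = q a.2 := fun a => rfl
  have hpsurj : Function.Surjective p := by
    intro s
    obtain ⟨k, hk⟩ := hq s
    exact ⟨π (0, k), by rw [hpπ]; exact hk⟩
  set ι : M →ₗ[Rᵐᵒᵖ] (M × K) ⧸ W := π ∘ₗ LinearMap.inl Rᵐᵒᵖ M K with hι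
  have hπeq : ∀ a b : M × K, a - b ∈ W → π a = π b := fun a b h =>
    (Submodule.Quotient.eq W).2 h
  have hιπ : ∀ m : M, ι m = π (m, 0) := fun m => rfl
  have hιinj : Function.Injective ι := by
    intro a b hab
    have h0 : ((a : M), (0 : K)) - (b, 0) ∈ W := (Submodule.Quotient.eq W).1 hab
    obtain ⟨d, hd⟩ := h0
    rw [hw] at hd
    have hd2 : -(d : K) = 0 := by
      have := congrArg Prod.snd hd
      simpa using this
    have hd0 : d = 0 := Subtype.ext (neg_eq_zero.1 hd2)
    have hd1 : g d = a - b := by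
      have := congrArg Prod.fst hd
      simpa using this
    rw [hd0, map_zero] at hd1
    exact (sub_eq_zero.1 hd1.symm)
  have hrange : LinearMap.range ι = LinearMap.ker p := by
    apply le_antisymm
    · rintro _ ⟨a, rfl⟩
      rw [LinearMap.mem_ker, hιπ, hpπ]
      exact map_zero q
    · rintro x hx
      obtain ⟨⟨a, k⟩, rfl⟩ := Submodule.Quotient.mk_surjective W x
      have hxk : q k = 0 := hx
      refine ⟨a + g ⟨k, LinearMap.mem_ker.2 hxk⟩, ?_⟩
      rw [hιπ]
      apply hπeq
      refine ⟨⟨k, LinearMap.mem_ker.2 hxk⟩, ?_⟩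
      have hwk : w ⟨k, LinearMap.mem_ker.2 hxk⟩ = (g ⟨k, LinearMap.mem_ker.2 hxk⟩, -k) := rfl
      rw [hwk]
      apply Prod.ext
      · show g _ = (a + g _) - a
        abel
      · show -k = 0 - k
        abel
  set e : M ≃ₗ[Rᵐᵒᵖ] ↥(LinearMap.ker p) :=
    (LinearEquiv.ofInjective ι hιinj).trans (LinearEquiv.ofEq _ _ hrange) with hedef
  have hecoe : ∀ m : M, ((e m : (M × K) ⧸ W)) = ι m := by
    intro m
    simp [hedef]
  have hkerminj : IsMininjective R ↥(LinearMap.ker p) := IsMininjective.congr e hM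
  obtain ⟨s, hs⟩ := hproj ((M × K) ⧸ W) p hpsurj hkerminj
  set κ : K →ₗ[Rᵐᵒᵖ] (M × K) ⧸ W := π ∘ₗ LinearMap.inr Rᵐᵒᵖ M K with hκ
  have hκπ : ∀ k : K, κ k = π (0, k) := fun k => rfl
  set θ : K →ₗ[Rᵐᵒᵖ] ((M × K) ⧸ W) := κ - s ∘ₗ q with hθ
  have hθmem : ∀ k : K, θ k ∈ LinearMap.ker p := by
    intro k
    have h1 : θ k = κ k - s (q k) := rfl
    rw [LinearMap.mem_ker, h1, map_sub]
    have h2 : p (κ k) = q k := by rw [hκπ, hpπ]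
    have h3 : p (s (q k)) = q k := by
      have := LinearMap.ext_iff.1 hs (q k)
      simpa using this
    rw [h2, h3, sub_self]
  set h' : K →ₗ[Rᵐᵒᵖ] ↥(LinearMap.ker p) := LinearMap.codRestrict _ θ hθmem with hh'
  refine ⟨e.symm.toLinearMap ∘ₗ h', fun d => ?_⟩
  have key : h' (d : K) = e (g d) := by
    apply Subtype.ext
    have hv1 : (h' (d : K) : (M × K) ⧸ W) = κ (d : K) - s (q (d : K)) := rfl
    have hd0 : q (d : K) = 0 := LinearMap.mem_ker.1 d.2
    rw [hv1, hd0, map_zero, sub_zero, hecoe, hκπ, hιπ]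
    apply hπeq
    refine ⟨-d, ?_⟩
    have hwd : w (-d) = (g (-d), -((-d : ↥(LinearMap.ker q)) : K)) := rfl
    rw [hwd]
    apply Prod.ext
    · show g (-d) = 0 - g d
      rw [map_neg]; abel
    · show -((-d : ↥(LinearMap.ker q)) : K) = ↑d - 0
      simp
  have : (e.symm.toLinearMap ∘ₗ h') ↑d = e.symm (h' ↑d) := rfl
  rw [this, key, e.symm_apply_apply]

/-- Key Baer-type extension from C-ring + strongly min-coherent + Kasch. -/
theorem baer_of_cring_coherent (hK : RightKasch.{u, u} R)
    (hC : ∀ I : Submodule Rᵐᵒᵖ R, I ≠ ⊤ →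
      (∀ P : Submodule Rᵐᵒᵖ R, P ⊓ I = ⊥ → P = ⊥) →
        ∃ S : Submodule Rᵐᵒᵖ (R ⧸ I), IsAtom S)
    (hcoh : RightStronglyMinCoherent R)
    {M : Type u} [AddCommGroup M] [Module Rᵐᵒᵖ M] (hM : IsMininjective R M)
    (I : Submodule Rᵐᵒᵖ R) (f : ↥I →ₗ[Rᵐᵒᵖ] M) :
    ∃ g : R →ₗ[Rᵐᵒᵖ] M, ∀ x : ↥I, g ↑x = f x := by
  classical
  set f₀ : R →ₗ.[Rᵐᵒᵖ] M := ⟨I, f⟩ with hf₀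
  have hub : ∀ c ⊆ {g : R →ₗ.[Rᵐᵒᵖ] M | f₀ ≤ g}, IsChain (· ≤ ·) c → ∀ y ∈ c,
      ∃ ub ∈ {g : R →ₗ.[Rᵐᵒᵖ] M | f₀ ≤ g}, ∀ z ∈ c, z ≤ ub := by
    intro c hcs hchain y hy
    refine ⟨LinearPMap.sSup c hchain.directedOn, ?_,
      fun z hz => LinearPMap.le_sSup hchain.directedOn hz⟩
    have hy' : f₀ ≤ y := hcs hy
    exact le_trans hy' (LinearPMap.le_sSup hchain.directedOn hy)
  have hf₀mem : f₀ ∈ {g : R →ₗ.[Rᵐᵒᵖ] M | f₀ ≤ g} := Set.mem_setOf_eq ▸ le_rfl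
  obtain ⟨m, hf₀m, hmax⟩ := zorn_le_nonempty₀ _ hub f₀ hf₀mem
  have hdomtop : m.domain = ⊤ := by
    by_contra hne
    have hess : ∀ P : Submodule Rᵐᵒᵖ R, P ⊓ m.domain = ⊥ → P = ⊥ := by
      intro P hP
      by_contra hPne
      set z : R →ₗ.[Rᵐᵒᵖ] M := ⟨P, 0⟩ with hz
      have hdisj : ∀ (x : m.domain) (y : z.domain), (x : R) = y → m x = z y :=
        LinearPMap.sup_h_of_disjoint m z (disjoint_iff.2 (by rwa [inf_comm] at hP))
      have hle : m ≤ m.sup z hdisj := m.left_le_sup z hdisj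
      have hmem' : m.sup z hdisj ∈ {g : R →ₗ.[Rᵐᵒᵖ] M | f₀ ≤ g} := le_trans hf₀m hle
      have hback := hmax.2 hmem' hle
      have hPle : P ≤ m.domain := by
        have hd : (m.sup z hdisj).domain = m.domain ⊔ P := LinearPMap.domain_sup m z hdisj
        have := hback.1
        rw [hd] at this
        exact le_trans le_sup_right this
      exact hPne (le_bot_iff.1 (hP ▸ le_inf le_rfl hPle))
    obtain ⟨S, hS⟩ := hC m.domain hne hess
    set K : Submodule Rᵐᵒᵖ R := S.comap m.domain.mkQ with hKdef
    have hdomK : m.domain ≤ K := by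
      intro x hx
      show m.domain.mkQ x ∈ S
      rw [Submodule.mkQ_apply, (Submodule.Quotient.mk_eq_zero _).2 hx]
      exact S.zero_mem
    have hqmem : ∀ x : ↥K, m.domain.mkQ ↑x ∈ S := fun x => x.2
    set q : ↥K →ₗ[Rᵐᵒᵖ] ↥S :=
      LinearMap.codRestrict S (m.domain.mkQ ∘ₗ K.subtype) hqmem with hqdef
    have hqsurj : Function.Surjective q := by
      rintro ⟨s, hs⟩
      obtain ⟨x, hx⟩ := m.domain.mkQ_surjective s
      refine ⟨⟨x, ?_⟩, ?_⟩
      · show m.domain.mkQ x ∈ S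
        rw [hx]; exact hs
      · apply Subtype.ext
        show m.domain.mkQ x = s
        exact hx
    have hkerq : ∀ x : ↥K, x ∈ LinearMap.ker q ↔ (x : R) ∈ m.domain := by
      intro x
      rw [LinearMap.mem_ker]
      constructor
      · intro h
        have := congrArg Subtype.val h
        have h2 : m.domain.mkQ ↑x = 0 := this
        rw [Submodule.mkQ_apply] at h2
        exact (Submodule.Quotient.mk_eq_zero _).1 h2
      · intro h
        apply Subtype.ext
        show m.domain.mkQ ↑x = 0
        rw [Submodule.mkQ_apply]
        exact (Submodule.Quotient.mk_eq_zero _).2 h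
    haveI hSsimple : IsSimpleModule Rᵐᵒᵖ ↥S := isSimpleModule_iff_isAtom.2 hS
    obtain ⟨A, ⟨eA⟩⟩ := hK ↥S hSsimple
    have hA : IsAtom A := by
      have : IsSimpleModule Rᵐᵒᵖ ↥A := IsSimpleModule.congr eA.symm
      exact isSimpleModule_iff_isAtom.1 this
    have hSproj : IsMinProjective R ↥S := IsMinProjective.congr eA.symm (hcoh A hA)
    set gD : ↥(LinearMap.ker q) →ₗ[Rᵐᵒᵖ] M :=
      m.toFun ∘ₗ LinearMap.codRestrict m.domain (K.subtype ∘ₗ (LinearMap.ker q).subtype)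
        (fun d => (hkerq d.1).1 d.2) with hgD
    obtain ⟨G, hG⟩ := pushout_extend hM q hqsurj hSproj gD
    set m' : R →ₗ.[Rᵐᵒᵖ] M := ⟨K, G⟩ with hm'
    have hmm' : m ≤ m' := by
      refine ⟨hdomK, fun x y hxy => ?_⟩
      have hy : y ∈ LinearMap.ker q := (hkerq y).2 (hxy ▸ x.2)
      have hGy := hG ⟨y, hy⟩
      have hshow : m' y = G ↑y := rfl
      rw [hshow]
      have : (↑(⟨y, hy⟩ : ↥(LinearMap.ker q)) : ↥K) = y := rfl
      rw [← this, hGy, hgD]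
      show m x = m.toFun _
      rw [LinearPMap.toFun_eq_coe]
      congr 1
      exact Subtype.ext hxy
    have hmem' : m' ∈ {g : R →ₗ.[Rᵐᵒᵖ] M | f₀ ≤ g} := le_trans hf₀m hmm'
    have hle' := hmax.2 hmem' hmm'
    obtain ⟨y, hyS, hy0⟩ := (Submodule.ne_bot_iff S).1 hS.1
    obtain ⟨x, hx⟩ := m.domain.mkQ_surjective y
    have hxK : x ∈ K := by
      show m.domain.mkQ x ∈ S
      rw [hx]; exact hyS
    have hxdom : x ∈ m.domain := hle'.1 hxK
    apply hy0
    rw [← hx, Submodule.mkQ_apply]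
    exact (Submodule.Quotient.mk_eq_zero _).2 hxdom
  set eTop := LinearEquiv.ofTop m.domain hdomtop with heTop
  refine ⟨m.toFun ∘ₗ eTop.symm.toLinearMap, fun x => ?_⟩
  have h1 : eTop.symm (x : R) = ⟨(x : R), hdomtop.symm ▸ trivial⟩ := by
    rw [heTop]
    exact LinearEquiv.ofTop_symm_apply m.domain (x : R)
  have h2 : (m.toFun ∘ₗ eTop.symm.toLinearMap) ↑x = m (eTop.symm ↑x) := rfl
  rw [h2, h1]
  have h3 := hf₀m.2 (x := x) (y := ⟨(x : R), hdomtop.symm ▸ trivial⟩) rfl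
  rw [← h3]
  rfl

end Aux

/-- For a right Kasch ring `R` the following are equivalent: (1) every
mininjective right `R`-module is injective; (2) `R` is right Artinian and right strongly
min-coherent; (3) `R` is a right C-ring and right strongly min-coherent. -/
theorem kasch_tfae (R : Type u) [Ring R] (hK : RightKasch.{u, u} R) :
    List.TFAE
      [ ∀ (M : Type u) [AddCommGroup M] [Module Rᵐᵒᵖ M],
        IsMininjective R M → Module.Injective Rᵐᵒᵖ M,
        IsArtinian Rᵐᵒᵖ R ∧ RightStronglyMinCoherent R,
        (∀ I : Submodule Rᵐᵒᵖ R, I ≠ ⊤ →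
            (∀ P : Submodule Rᵐᵒᵖ R, P ⊓ I = ⊥ → P = ⊥) →
              ∃ S : Submodule Rᵐᵒᵖ (R ⧸ I), IsAtom S) ∧
          RightStronglyMinCoherent R ] := by
  tfae_have 1 → 2 := by
    intro h1
    constructor
    · exact isArtinian_of_noeth_semiatomic (isNoetherian_of_h1 h1)
        (fun M _ _ _ => exists_atom_of_h1 h1 M)
    · intro I hI X _ _ p hp hker
      exact splitting_of_injective_ker p hp (h1 _ hker)
  tfae_have 2 → 3 := by
    rintro ⟨hArt, hcoh⟩
    refine ⟨?_, hcoh⟩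
    intro I hItop _
    haveI : IsArtinian Rᵐᵒᵖ R := hArt
    haveI : Nontrivial (R ⧸ I) :=
      Submodule.Quotient.nontrivial_iff.2 (lt_top_iff_ne_top.2 hItop).ne
    haveI : IsAtomic (Submodule Rᵐᵒᵖ (R ⧸ I)) :=
      isAtomic_of_orderBot_wellFounded_lt ((isArtinian_iff _ _).1 inferInstance)
    rcases IsAtomic.eq_bot_or_exists_atom_le (⊤ : Submodule Rᵐᵒᵖ (R ⧸ I)) with htop | ⟨a, ha, _⟩
    · exfalso
      obtain ⟨x, y, hxy⟩ := exists_pair_ne (R ⧸ I)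
      apply hxy
      have hx : x ∈ (⊥ : Submodule Rᵐᵒᵖ (R ⧸ I)) := htop ▸ Submodule.mem_top
      have hy : y ∈ (⊥ : Submodule Rᵐᵒᵖ (R ⧸ I)) := htop ▸ Submodule.mem_top
      rw [Submodule.mem_bot] at hx hy
      rw [hx, hy]
    · exact ⟨a, ha⟩
  tfae_have 3 → 1 := by
    rintro ⟨hC, hcoh⟩ M _ _ hM
    exact injective_of_rightBaer M fun I f => baer_of_cring_coherent hK hC hcoh hM I f
  tfae_finish
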